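/- Let a ∈ ℝ² be a standard Gaussian vector, u = e₁, v = (cos θ, sin θ) for θ ∈ [0, π]. Then E[|⟨a,u⟩⟨a,v⟩|] − E[⟨a,u⟩⟨a,v⟩] = (2/π)(sin θ + (π/2 − θ)cos θ) − cos θ, which is strictly positive for θ ∈ (0, π]. -/

import Mathlib

open MeasureTheory Real ProbabilityTheory Set intervalIntegral Filter
open scoped ENNReal NNReal


-- positivity lemma
lemma pos_part (θ : ℝ) (hθ : θ ∈ Set.Icc 0 π) (h0 : 0 < θ) :
    0 < (2 / π) * (Real.sin θ + (π / 2 - θ) * Real.cos θ) - Real.cos θ := by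
  have hπ : (0:ℝ) < π := Real.pi_pos
  have key : 0 < Real.sin θ - θ * Real.cos θ := by
    rcases lt_trichotomy θ (π/2) with h | h | h
    · have ht := Real.lt_tan h0 h
      have hc : 0 < Real.cos θ := Real.cos_pos_of_mem_Ioo ⟨by linarith, h⟩
      rw [Real.tan_eq_sin_div_cos, lt_div_iff₀ hc] at ht
      nlinarith
    · simp [h]
    · have hs : 0 ≤ Real.sin θ := Real.sin_nonneg_of_nonneg_of_le_pi h0.le hθ.2
      have hc : Real.cos θ < 0 := by
        rcases eq_or_lt_of_le hθ.2 with h2 | h2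
        · rw [h2]; simp [Real.cos_pi]
        · exact Real.cos_neg_of_pi_div_two_lt_of_lt h (by linarith)
      nlinarith
  have : (2 / π) * (Real.sin θ + (π / 2 - θ) * Real.cos θ) - Real.cos θ
      = (2 / π) * (Real.sin θ - θ * Real.cos θ) := by
    field_simp; ring
  rw [this]
  positivity


lemma radial_integrable : IntegrableOn (fun r : ℝ => r ^ 3 * Real.exp (-r^2/2)) (Ioi 0) := by
  have h := integrableOn_rpow_mul_exp_neg_mul_sq (b := 1/2) (by norm_num) (s := 3) (by norm_num)
  apply h.congr_fun ?_ measurableSet_Ioi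
  intro x hx
  rw [Set.mem_Ioi] at hx
  have h3 : x ^ (3:ℝ) = x ^ (3:ℕ) := by
    rw [← Real.rpow_natCast x 3]; norm_num
  simp only [h3]
  ring_nf

lemma radial_value : ∫ r in Ioi (0:ℝ), r ^ 3 * Real.exp (-r^2/2) = 2 := by
  have hderiv : ∀ x ∈ Ici (0:ℝ), HasDerivAt (fun r : ℝ => -(r^2+2) * Real.exp (-r^2/2))
      (x ^ 3 * Real.exp (-x^2/2)) x := by
    intro x _
    have h1 : HasDerivAt (fun r : ℝ => -r^2/2) (-x) x := by
      have := (hasDerivAt_pow 2 x).neg.div_const 2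
      simpa using this.congr_deriv (by ring)
    have h2 := (Real.hasDerivAt_exp (-x^2/2)).comp x h1
    have h3 : HasDerivAt (fun r : ℝ => -(r^2+2)) (-(2*x)) x := by
      exact (((hasDerivAt_pow 2 x).add_const 2).neg).congr_deriv (by norm_num)
    have := h3.mul h2
    refine this.congr_deriv ?_
    simp [Function.comp]
    ring
  have htend : Tendsto (fun r : ℝ => -(r^2+2) * Real.exp (-r^2/2)) atTop (nhds 0) := by
    have h1 : Tendsto (fun y : ℝ => -(2*y+2) * Real.exp (-y)) atTop (nhds 0) := by
      have ha : Tendsto (fun y : ℝ => y * Real.exp (-y)) atTop (nhds 0) := by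
        simpa using Real.tendsto_pow_mul_exp_neg_atTop_nhds_zero 1
      have hb : Tendsto (fun y : ℝ => Real.exp (-y)) atTop (nhds 0) :=
        Real.tendsto_exp_neg_atTop_nhds_zero
      have := ((ha.const_mul (-2)).add (hb.const_mul (-2)))
      simpa using this.congr (by intro y; ring)
    have h2 : Tendsto (fun r : ℝ => r^2/2) atTop atTop := by
      apply Tendsto.atTop_div_const (by norm_num)
      exact tendsto_pow_atTop (by norm_num)
    have := h1.comp h2
    refine this.congr ?_
    intro r
    simp only [Function.comp]
    ring_nf
  have := integral_Ioi_of_hasDerivAt_of_tendsto (a := 0)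
    (by exact ((hderiv 0 (Set.mem_Ici.mpr (le_refl 0))).continuousAt.continuousWithinAt))
    (fun x hx => hderiv x (mem_Ici.mpr (le_of_lt hx))) radial_integrable htend
  rw [this]; norm_num


lemma intB (θ : ℝ) (hθ : θ ∈ Set.Icc 0 π) :
    ∫ ψ in (0:ℝ)..(2*π), |Real.cos ψ + Real.cos θ|
      = 4 * Real.sin θ + (2*π - 4*θ) * Real.cos θ := by
  have hπ : (0:ℝ) < π := Real.pi_pos
  obtain ⟨h0, h1⟩ := hθ
  have hcont : Continuous fun ψ : ℝ => |Real.cos ψ + Real.cos θ| :=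
    (Real.continuous_cos.add continuous_const).abs
  have hint : ∀ a b : ℝ, IntervalIntegrable (fun ψ => |Real.cos ψ + Real.cos θ|) volume a b :=
    fun a b => hcont.intervalIntegrable a b
  have hintc : ∀ a b : ℝ, IntervalIntegrable (fun ψ => Real.cos ψ + Real.cos θ) volume a b :=
    fun a b => (Real.continuous_cos.add continuous_const).intervalIntegrable a b
  -- piecewise values
  have hval : ∀ a b : ℝ, (∫ ψ in a..b, (Real.cos ψ + Real.cos θ))
      = Real.sin b - Real.sin a + (b - a) * Real.cos θ := by
    intro a b
    rw [intervalIntegral.integral_add (Real.continuous_cos.intervalIntegrable a b)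
      (intervalIntegrable_const), integral_cos, intervalIntegral.integral_const]
    simp [smul_eq_mul]
  have split : (∫ ψ in (0:ℝ)..(2*π), |Real.cos ψ + Real.cos θ|)
      = (∫ ψ in (0:ℝ)..(π-θ), |Real.cos ψ + Real.cos θ|)
      + (∫ ψ in (π-θ)..(π+θ), |Real.cos ψ + Real.cos θ|)
      + (∫ ψ in (π+θ)..(2*π), |Real.cos ψ + Real.cos θ|) := by
    rw [intervalIntegral.integral_add_adjacent_intervals (hint _ _) (hint _ _),
      intervalIntegral.integral_add_adjacent_intervals (hint _ _) (hint _ _)]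
  have e1 : (∫ ψ in (0:ℝ)..(π-θ), |Real.cos ψ + Real.cos θ|)
      = ∫ ψ in (0:ℝ)..(π-θ), (Real.cos ψ + Real.cos θ) := by
    apply intervalIntegral.integral_congr
    intro ψ hψ
    rw [Set.uIcc_of_le (by linarith)] at hψ
    have : Real.cos (π - θ) ≤ Real.cos ψ :=
      Real.cos_le_cos_of_nonneg_of_le_pi hψ.1 (by linarith) hψ.2
    rw [Real.cos_pi_sub] at this
    exact abs_of_nonneg (by linarith)
  have e2 : (∫ ψ in (π-θ)..(π+θ), |Real.cos ψ + Real.cos θ|)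
      = ∫ ψ in (π-θ)..(π+θ), -(Real.cos ψ + Real.cos θ) := by
    apply intervalIntegral.integral_congr
    intro ψ hψ
    rw [Set.uIcc_of_le (by linarith)] at hψ
    have habs : |ψ - π| ≤ θ := abs_sub_le_iff.mpr ⟨by linarith [hψ.2], by linarith [hψ.1]⟩
    have : Real.cos θ ≤ Real.cos |ψ - π| :=
      Real.cos_le_cos_of_nonneg_of_le_pi (abs_nonneg _) h1 habs
    rw [Real.cos_abs, show ψ - π = -(π - ψ) by ring, Real.cos_neg, Real.cos_pi_sub] at this
    exact abs_of_nonpos (by linarith)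
  have e3 : (∫ ψ in (π+θ)..(2*π), |Real.cos ψ + Real.cos θ|)
      = ∫ ψ in (π+θ)..(2*π), (Real.cos ψ + Real.cos θ) := by
    apply intervalIntegral.integral_congr
    intro ψ hψ
    rw [Set.uIcc_of_le (by linarith)] at hψ
    have h2 : Real.cos (π - θ) ≤ Real.cos (2*π - ψ) :=
      Real.cos_le_cos_of_nonneg_of_le_pi (by linarith [hψ.2]) (by linarith) (by linarith [hψ.1])
    rw [Real.cos_pi_sub, Real.cos_two_pi_sub] at h2
    exact abs_of_nonneg (by linarith)
  rw [split, e1, e2, e3, intervalIntegral.integral_neg, hval, hval, hval]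
  have : Real.sin (π + θ) = -Real.sin θ := by
    rw [Real.sin_add]; simp
  rw [this, Real.sin_pi_sub, Real.sin_zero, Real.sin_two_pi]
  ring


lemma prod_to_sum (φ θ : ℝ) :
    Real.cos φ * Real.cos (φ - θ) = (Real.cos (2*φ - θ) + Real.cos θ) / 2 := by
  have h1 : Real.cos (2*φ - θ)
      = Real.cos φ * Real.cos (φ-θ) - Real.sin φ * Real.sin (φ-θ) := by
    rw [show 2*φ-θ = φ + (φ-θ) by ring, Real.cos_add]
  have h2 := Real.cos_sub φ (φ-θ)
  rw [show φ-(φ-θ) = θ by ring] at h2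
  rw [h1, h2]
  ring

lemma angular_abs (θ : ℝ) (hθ : θ ∈ Set.Icc 0 π) :
    ∫ φ in (-π)..π, |Real.cos φ * Real.cos (φ - θ)|
      = 2 * Real.sin θ + (π - 2*θ) * Real.cos θ := by
  have hper : Function.Periodic (fun ψ : ℝ => |Real.cos ψ + Real.cos θ|) (2*π) := by
    intro x; simp [Real.cos_add_two_pi]
  have step1 : ∫ φ in (-π)..π, |Real.cos φ * Real.cos (φ - θ)|
      = ∫ φ in (-π)..π, |Real.cos (2*φ - θ) + Real.cos θ| / 2 := by
    apply intervalIntegral.integral_congr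
    intro φ _
    show |Real.cos φ * Real.cos (φ - θ)| = |Real.cos (2*φ - θ) + Real.cos θ| / 2
    rw [prod_to_sum, abs_div]
    norm_num
  have step2 : (∫ φ in (-π)..π, |Real.cos (2*φ - θ) + Real.cos θ|)
      = (2:ℝ)⁻¹ • ∫ ψ in (2*(-π)-θ)..(2*π-θ), |Real.cos ψ + Real.cos θ| := by
    simpa using intervalIntegral.integral_comp_mul_sub (fun ψ => |Real.cos ψ + Real.cos θ|)
      (two_ne_zero) θ (a := -π) (b := π)
  have splitper : (∫ ψ in (2*(-π)-θ)..(2*π-θ), |Real.cos ψ + Real.cos θ|)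
      = 2 * ∫ ψ in (0:ℝ)..(2*π), |Real.cos ψ + Real.cos θ| := by
    have hA : (∫ ψ in (2*(-π)-θ)..(-θ), |Real.cos ψ + Real.cos θ|)
        = ∫ ψ in (0:ℝ)..(2*π), |Real.cos ψ + Real.cos θ| := by
      have h := hper.intervalIntegral_add_eq (2*(-π)-θ) 0
      rw [show 2*(-π)-θ+(2*π) = -θ by ring, zero_add] at h
      exact h
    have hB : (∫ ψ in (-θ)..(2*π-θ), |Real.cos ψ + Real.cos θ|)
        = ∫ ψ in (0:ℝ)..(2*π), |Real.cos ψ + Real.cos θ| := by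
      have h := hper.intervalIntegral_add_eq (-θ) 0
      rw [show -θ+(2*π) = 2*π-θ by ring, zero_add] at h
      exact h
    have hadj : (∫ ψ in (2*(-π)-θ)..(-θ), |Real.cos ψ + Real.cos θ|)
        + (∫ ψ in (-θ)..(2*π-θ), |Real.cos ψ + Real.cos θ|)
        = ∫ ψ in (2*(-π)-θ)..(2*π-θ), |Real.cos ψ + Real.cos θ| :=
      intervalIntegral.integral_add_adjacent_intervals
        (((Real.continuous_cos.add continuous_const).abs).intervalIntegrable _ _)
        (((Real.continuous_cos.add continuous_const).abs).intervalIntegrable _ _)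
    rw [← hadj, hA, hB]
    ring
  rw [step1, intervalIntegral.integral_div, step2, splitper, intB θ hθ, smul_eq_mul]
  ring


lemma angular_plain (θ : ℝ) :
    ∫ φ in (-π)..π, Real.cos φ * Real.cos (φ - θ) = π * Real.cos θ := by
  have step1 : ∫ φ in (-π)..π, Real.cos φ * Real.cos (φ - θ)
      = ∫ φ in (-π)..π, (Real.cos (2*φ - θ) + Real.cos θ) / 2 := by
    apply intervalIntegral.integral_congr
    intro φ _
    exact prod_to_sum φ θ
  have step2 : (∫ φ in (-π)..π, Real.cos (2*φ - θ))
      = (2:ℝ)⁻¹ • ∫ ψ in (2*(-π)-θ)..(2*π-θ), Real.cos ψ := by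
    simpa using intervalIntegral.integral_comp_mul_sub Real.cos (two_ne_zero) θ
      (a := -π) (b := π)
  have hcosint : ∀ a b : ℝ, IntervalIntegrable (fun φ => Real.cos (2*φ - θ)) volume a b :=
    fun a b => (Real.continuous_cos.comp (by continuity)).intervalIntegrable a b
  have hsin : Real.sin (2*π - θ) - Real.sin (2*(-π) - θ) = 0 := by
    rw [Real.sin_sub, show 2*(-π)-θ = -(2*π+θ) by ring, Real.sin_neg, Real.sin_add]
    simp [Real.sin_two_pi, Real.cos_two_pi]
  rw [step1]
  have : ∀ φ : ℝ, (Real.cos (2*φ - θ) + Real.cos θ) / 2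
      = (2:ℝ)⁻¹ * Real.cos (2*φ - θ) + (2:ℝ)⁻¹ * Real.cos θ := by intro φ; ring
  rw [intervalIntegral.integral_congr (fun φ _ => this φ),
    intervalIntegral.integral_add ((hcosint _ _).const_mul _)
      (_root_.intervalIntegrable_const (c := (2:ℝ)⁻¹ * Real.cos θ)),
    intervalIntegral.integral_const_mul, intervalIntegral.integral_const_mul,
    step2, integral_cos, hsin, intervalIntegral.integral_const]
  simp
  ring


lemma hm_gauss : Measurable (fun p : ℝ × ℝ => gaussianPDFReal 0 1 p.1 * gaussianPDFReal 0 1 p.2) :=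
  ((measurable_gaussianPDFReal 0 1).comp measurable_fst).mul
    ((measurable_gaussianPDFReal 0 1).comp measurable_snd)

lemma gauss_prod_eq : (gaussianReal 0 1).prod (gaussianReal 0 1)
    = (volume : Measure (ℝ × ℝ)).withDensity
        (fun p => ((gaussianPDFReal 0 1 p.1 * gaussianPDFReal 0 1 p.2).toNNReal : ℝ≥0∞)) := by
  have hmeas : Measurable fun p : ℝ × ℝ =>
      ((gaussianPDFReal 0 1 p.1 * gaussianPDFReal 0 1 p.2).toNNReal : ℝ≥0∞) :=
    hm_gauss.real_toNNReal.coe_nnreal_ennreal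
  refine Measure.prod_eq fun s t hs ht => ?_
  rw [withDensity_apply _ (hs.prod ht)]
  have hrestrict : (volume : Measure (ℝ × ℝ)).restrict (s ×ˢ t)
      = ((volume : Measure ℝ).restrict s).prod ((volume : Measure ℝ).restrict t) := by
    rw [MeasureTheory.Measure.volume_eq_prod, Measure.prod_restrict]
  rw [hrestrict]
  have : ∀ p : ℝ × ℝ, ((gaussianPDFReal 0 1 p.1 * gaussianPDFReal 0 1 p.2).toNNReal : ℝ≥0∞)
      = gaussianPDF 0 1 p.1 * gaussianPDF 0 1 p.2 := by
    intro p
    rw [gaussianPDF_def]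
    rw [← ENNReal.ofReal_mul (gaussianPDFReal_nonneg 0 1 p.1)]
    rfl
  simp_rw [this]
  rw [MeasureTheory.lintegral_prod_mul ((measurable_gaussianPDF 0 1).aemeasurable)
    ((measurable_gaussianPDF 0 1).aemeasurable)]
  rw [gaussianReal_apply 0 one_ne_zero s, gaussianReal_apply 0 one_ne_zero t]

lemma integral_gauss_prod (f : ℝ × ℝ → ℝ) :
    ∫ a, f a ∂((gaussianReal 0 1).prod (gaussianReal 0 1))
      = ∫ p : ℝ × ℝ, (gaussianPDFReal 0 1 p.1 * gaussianPDFReal 0 1 p.2) * f p := by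
  rw [gauss_prod_eq]
  rw [integral_withDensity_eq_integral_smul hm_gauss.real_toNNReal f]
  congr 1
  funext p
  rw [NNReal.smul_def, Real.coe_toNNReal _
    (mul_nonneg (gaussianPDFReal_nonneg 0 1 p.1) (gaussianPDFReal_nonneg 0 1 p.2))]
  rfl


lemma gauss_pdf_mul (a b : ℝ) :
    gaussianPDFReal 0 1 a * gaussianPDFReal 0 1 b
      = (2*π)⁻¹ * Real.exp (-(a^2+b^2)/2) := by
  unfold gaussianPDFReal
  have hπ : (0:ℝ) < 2*π := by positivity
  push_cast
  rw [mul_mul_mul_comm, ← Real.exp_add, ← mul_inv]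
  rw [show (2:ℝ)*π*1 = 2*π by ring, Real.mul_self_sqrt hπ.le]
  congr 1
  ring

lemma gauss_polar (h : ℝ → ℝ) (f : ℝ × ℝ → ℝ)
    (hf : ∀ r φ : ℝ, f (r * Real.cos φ, r * Real.sin φ) = r^2 * h φ) :
    ∫ p : ℝ × ℝ, (gaussianPDFReal 0 1 p.1 * gaussianPDFReal 0 1 p.2) * f p
      = π⁻¹ * ∫ φ in (-π)..π, h φ := by
  have key := integral_comp_polarCoord_symm
    (fun p : ℝ × ℝ => (gaussianPDFReal 0 1 p.1 * gaussianPDFReal 0 1 p.2) * f p)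
  rw [← key]
  have hsymm : ∀ p : ℝ × ℝ, polarCoord.symm p = (p.1 * Real.cos p.2, p.1 * Real.sin p.2) :=
    fun p => rfl
  have hpt : ∀ p : ℝ × ℝ,
      p.1 • ((fun p : ℝ × ℝ => (gaussianPDFReal 0 1 p.1 * gaussianPDFReal 0 1 p.2) * f p)
        (polarCoord.symm p))
      = ((2*π)⁻¹ * (p.1 ^ 3 * Real.exp (-p.1^2/2))) * h p.2 := by
    intro p
    rw [hsymm p]
    simp only [smul_eq_mul]
    rw [gauss_pdf_mul, hf p.1 p.2]
    have hsq : (p.1 * Real.cos p.2)^2 + (p.1 * Real.sin p.2)^2 = p.1^2 := by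
      have := Real.sin_sq_add_cos_sq p.2
      nlinarith [this]
    rw [hsq]
    ring
  rw [show polarCoord.target = Ioi (0:ℝ) ×ˢ Ioo (-π) π from rfl]
  calc (∫ p in Ioi (0:ℝ) ×ˢ Ioo (-π) π,
        p.1 • ((fun p : ℝ × ℝ => (gaussianPDFReal 0 1 p.1 * gaussianPDFReal 0 1 p.2) * f p)
          (polarCoord.symm p)))
      = ∫ p in Ioi (0:ℝ) ×ˢ Ioo (-π) π,
          ((2*π)⁻¹ * (p.1 ^ 3 * Real.exp (-p.1^2/2))) * h p.2 := by
        exact integral_congr_ae (Filter.EventuallyEq.restrict (Filter.Eventually.of_forall hpt))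
    _ = (∫ r in Ioi (0:ℝ), (2*π)⁻¹ * (r ^ 3 * Real.exp (-r^2/2))) * ∫ φ in Ioo (-π) π, h φ := by
        rw [MeasureTheory.Measure.volume_eq_prod]
        exact MeasureTheory.setIntegral_prod_mul
          (fun r : ℝ => (2*π)⁻¹ * (r ^ 3 * Real.exp (-r^2/2))) h (Ioi 0) (Ioo (-π) π)
    _ = π⁻¹ * ∫ φ in (-π)..π, h φ := by
        rw [MeasureTheory.integral_const_mul, radial_value]
        rw [intervalIntegral.integral_of_le (by linarith [Real.pi_pos]),
          MeasureTheory.integral_Ioc_eq_integral_Ioo]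
        rw [show (2*π)⁻¹ * 2 = π⁻¹ by field_simp]

/-- For a standard Gaussian vector `a ∈ ℝ²`, `u = e₁` and `v = (cos θ, sin θ)` with
`θ ∈ [0, π]`, one has
`E|⟨a,u⟩⟨a,v⟩| − E[⟨a,u⟩⟨a,v⟩] = (2/π)(sin θ + (π/2 − θ) cos θ) − cos θ`,
which is strictly positive for `θ ∈ (0, π]`. -/
theorem expectation_gap_positive (θ : ℝ) (hθ : θ ∈ Set.Icc 0 π) :
    ((∫ a : ℝ × ℝ, |a.1 * (a.1 * Real.cos θ + a.2 * Real.sin θ)|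
          ∂((gaussianReal 0 1).prod (gaussianReal 0 1))) -
        ∫ a : ℝ × ℝ, a.1 * (a.1 * Real.cos θ + a.2 * Real.sin θ)
          ∂((gaussianReal 0 1).prod (gaussianReal 0 1)) =
      (2 / π) * (Real.sin θ + (π / 2 - θ) * Real.cos θ) - Real.cos θ) ∧
    (0 < θ → 0 < (2 / π) * (Real.sin θ + (π / 2 - θ) * Real.cos θ) - Real.cos θ) := by
  constructor
  · have hcore : ∀ r φ : ℝ, (r * Real.cos φ) * ((r * Real.cos φ) * Real.cos θ
        + (r * Real.sin φ) * Real.sin θ) = r^2 * (Real.cos φ * Real.cos (φ - θ)) := by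
      intro r φ
      rw [Real.cos_sub]
      ring
    have hf1 : ∀ r φ : ℝ, (fun p : ℝ × ℝ => |p.1 * (p.1 * Real.cos θ + p.2 * Real.sin θ)|)
        (r * Real.cos φ, r * Real.sin φ) = r^2 * |Real.cos φ * Real.cos (φ - θ)| := by
      intro r φ
      show |(r * Real.cos φ) * ((r * Real.cos φ) * Real.cos θ
        + (r * Real.sin φ) * Real.sin θ)| = _
      rw [hcore, abs_mul, abs_of_nonneg (sq_nonneg r)]
    have hf2 : ∀ r φ : ℝ, (fun p : ℝ × ℝ => p.1 * (p.1 * Real.cos θ + p.2 * Real.sin θ))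
        (r * Real.cos φ, r * Real.sin φ) = r^2 * (Real.cos φ * Real.cos (φ - θ)) := by
      intro r φ
      exact hcore r φ
    rw [integral_gauss_prod, integral_gauss_prod,
      gauss_polar (fun φ => |Real.cos φ * Real.cos (φ - θ)|) _ hf1,
      gauss_polar (fun φ => Real.cos φ * Real.cos (φ - θ)) _ hf2,
      angular_abs θ hθ, angular_plain θ]
    have hπ : (π:ℝ) ≠ 0 := Real.pi_ne_zero
    field_simp
  · exact pos_part θ hθ
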